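/- arXiv:1303.0235 — 5 statements merged into one kernel-verified Lean document; each statement's English description precedes it below -/
import Mathlib

section
/- Let φ : [0,∞) → [0,∞) be regressive, super-additive, and complementary coercive. Let (θ_n)_{n≥0} and (δ_n)_{n≥0} be sequences in [0,∞) such that θ_{m+1} ≤ φ(θ_m) + δ_m − δ_{m+1} for all m ≥ 0. Then the series ∑_n θ_n converges. -/
/-!
Summing the recursion telescopes the `δ`-terms, and super-additivity gives
`∑ m < n, φ (θ m) ≤ φ (S n)` for the partial sums `S n`. Hence `S n - φ (S n) ≤ θ 0 + δ 0`
for every `n`, and since `id - φ` is coercive the increasing sequence `S n` stays bounded.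
-/

open Finset Filter

theorem Finset.sum_apply_le_apply_sum_of_superadditive {ι M N : Type*}
    [AddCommMonoid M] [PartialOrder M] [IsOrderedAddMonoid M]
    [AddCommMonoid N] [PartialOrder N] [IsOrderedAddMonoid N]
    {φ : M → N} (h0 : 0 ≤ φ 0)
    (hsuper : ∀ t s, 0 ≤ t → 0 ≤ s → φ t + φ s ≤ φ (t + s))
    (s : Finset ι) {x : ι → M} (hx : ∀ i ∈ s, 0 ≤ x i) :
    ∑ i ∈ s, φ (x i) ≤ φ (∑ i ∈ s, x i) :=
  le_sum_of_subadditive_on_pred (OrderDual.toDual ∘ φ) (0 ≤ ·) h0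
    (fun t s ht hs ↦ hsuper t s ht hs) (fun _ _ ↦ add_nonneg) x hx

theorem Finset.sum_range_succ_le_of_le_add_sub {G : Type*}
    [AddCommGroup G] [PartialOrder G] [IsOrderedAddMonoid G] {θ δ u : ℕ → G}
    (h : ∀ m, θ (m + 1) ≤ u m + δ m - δ (m + 1)) (n : ℕ) :
    ∑ k ∈ range (n + 1), θ k ≤ θ 0 + δ 0 - δ n + ∑ m ∈ range n, u m := by
  induction n with
  | zero => simp
  | succ n ih =>
    rw [sum_range_succ _ (n + 1), sum_range_succ u n]
    calc _ ≤ θ 0 + δ 0 - δ n + ∑ m ∈ range n, u m + (u n + δ n - δ (n + 1)) :=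
          add_le_add ih (h n)
      _ = _ := by abel

theorem series_convergence_lemma_general (φ : ℝ → ℝ)
    (hnn : ∀ t, 0 ≤ t → 0 ≤ φ t)
    (hsuper : ∀ t s, 0 ≤ t → 0 ≤ s → φ t + φ s ≤ φ (t + s))
    (hcoer : Filter.Tendsto (fun t => t - φ t) Filter.atTop Filter.atTop)
    (θ δ : ℕ → ℝ) (hθ0 : ∀ n, 0 ≤ θ n) (hδ0 : ∀ n, 0 ≤ δ n)
    (hrec : ∀ m : ℕ, θ (m + 1) ≤ φ (θ m) + δ m - δ (m + 1)) :
    Summable θ := by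
  set S : ℕ → ℝ := fun n ↦ ∑ k ∈ range n, θ k
  have hbound : ∀ n, S n - φ (S n) ≤ θ 0 + δ 0 := fun n ↦ by
    have hstep : S (n + 1) = S n + θ n := sum_range_succ θ n
    have hsum := sum_range_succ_le_of_le_add_sub hrec n
    have hsuper_sum := sum_apply_le_apply_sum_of_superadditive (hnn 0 le_rfl) hsuper (range n)
      (x := θ) fun i _ ↦ hθ0 i
    linarith [hθ0 n, hδ0 n]
  refine (summable_iff_not_tendsto_nat_atTop_of_nonneg hθ0).2 fun hS ↦ ?_
  obtain ⟨n, hn⟩ := ((hcoer.comp hS).eventually_gt_atTop (θ 0 + δ 0)).exists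
  exact hn.not_ge (hbound n)

/-- Lemma 1 of the paper: if `φ : [0,∞) → [0,∞)` is regressive, super-additive
and complementary coercive, and nonnegative sequences `θ`, `δ` satisfy
`θ (m+1) ≤ φ (θ m) + δ m - δ (m+1)` for all `m`, then `∑ θ n` converges. -/
theorem series_convergence_lemma (φ : ℝ → ℝ)
    (hnn : ∀ t, 0 ≤ t → 0 ≤ φ t)
    (hreg0 : φ 0 = 0) (hreg : ∀ t, 0 < t → φ t < t)
    (hsuper : ∀ t s, 0 ≤ t → 0 ≤ s → φ t + φ s ≤ φ (t + s))
    (hcoer : Filter.Tendsto (fun t => t - φ t) Filter.atTop Filter.atTop)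
    (θ δ : ℕ → ℝ) (hθ0 : ∀ n, 0 ≤ θ n) (hδ0 : ∀ n, 0 ≤ δ n)
    (hrec : ∀ m : ℕ, θ (m + 1) ≤ φ (θ m) + δ m - δ (m + 1)) :
    Summable θ :=
  series_convergence_lemma_general φ hnn hsuper hcoer θ δ hθ0 hδ0 hrec
end

section
/- Let (X,d) be a metric space, S, T : X → X selfmaps, φ : [0,∞) → [0,∞) regressive, super-additive, and complementary coercive, and γ : X × X → [0,∞) a map satisfying d(Sx,Ty) ≤ φ(d(x,y)) + γ(x,y) − γ(Sx,Ty) for all x, y ∈ X. Then for all x₀, y₀ ∈ X, the series ∑_n d(Sⁿx₀, Tⁿy₀) converges. -/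
/-!
Along the orbit, `a n = d(Sⁿx₀, Tⁿy₀)` and `g n = γ(Sⁿx₀, Tⁿy₀)` satisfy
`a (n+1) ≤ φ (a n) + g n - g (n+1)`. Summing, the `g`-terms telescope and super-additivity gathers
the `φ (a k)` into `φ` of the partial sum `P`, so `P - φ P ≤ a 0 + g 0` along the partial sums.
Since `t - φ t → ∞`, the partial sums are bounded.
-/

open Filter Finset

theorem Finset.sum_le_of_superadditiveOn_nonneg {ι : Type*} {φ : ℝ → ℝ}
    (hsuper : ∀ t s, 0 ≤ t → 0 ≤ s → φ t + φ s ≤ φ (t + s))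
    {s : Finset ι} (hs : s.Nonempty) {a : ι → ℝ} (ha : ∀ i ∈ s, 0 ≤ a i) :
    ∑ i ∈ s, φ (a i) ≤ φ (∑ i ∈ s, a i) := by
  have h := Finset.le_sum_nonempty_of_subadditive_on_pred (fun t => -φ t) (0 ≤ ·)
    (fun t s ht hs => by linarith [hsuper t s ht hs]) (fun _ _ => add_nonneg) a s hs ha
  rw [Finset.sum_neg_distrib] at h
  linarith

theorem sum_range_succ_sub_le_of_le_add_sub {φ : ℝ → ℝ}
    (hsuper : ∀ t s, 0 ≤ t → 0 ≤ s → φ t + φ s ≤ φ (t + s))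
    {a g : ℕ → ℝ} (ha : ∀ n, 0 ≤ a n) (hrec : ∀ n, a (n + 1) ≤ φ (a n) + g n - g (n + 1))
    (n : ℕ) :
    ∑ k ∈ range (n + 1), a k - φ (∑ k ∈ range (n + 1), a k) ≤ a 0 + g 0 - g (n + 1) := by
  have htele :
      ∑ k ∈ range (n + 1), a (k + 1) ≤ ∑ k ∈ range (n + 1), φ (a k) + (g 0 - g (n + 1)) :=
    calc ∑ k ∈ range (n + 1), a (k + 1)
        ≤ ∑ k ∈ range (n + 1), (φ (a k) + (g k - g (k + 1))) :=
          sum_le_sum fun k _ => by linarith [hrec k]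
      _ = ∑ k ∈ range (n + 1), φ (a k) + (g 0 - g (n + 1)) := by
          rw [sum_add_distrib, sum_range_sub']
  have hφsum := sum_le_of_superadditiveOn_nonneg hsuper (nonempty_range_add_one (n := n))
    (a := a) fun k _ => ha k
  have hmono : ∑ k ∈ range (n + 1), a k ≤ ∑ k ∈ range (n + 2), a k :=
    sum_le_sum_of_subset_of_nonneg (range_subset_range.2 (by omega)) fun k _ _ => ha k
  rw [sum_range_succ' a (n + 1)] at hmono
  linarith

theorem summable_of_tendsto_atTop_of_sum_range_succ_le {a : ℕ → ℝ} (ha : ∀ n, 0 ≤ a n)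
    {ψ : ℝ → ℝ} (hψ : Tendsto ψ atTop atTop) {C : ℝ}
    (hC : ∀ n, ψ (∑ k ∈ range (n + 1), a k) ≤ C) : Summable a := by
  obtain ⟨M, hM⟩ := (tendsto_atTop.mp hψ (C + 1)).exists_forall_of_atTop
  have hbound (n : ℕ) : ∑ k ∈ range (n + 1), a k ≤ M := by
    by_contra! h
    linarith [hM _ h.le, hC n]
  refine summable_of_sum_range_le ha fun n => (hbound n).trans' ?_
  exact sum_le_sum_of_subset_of_nonneg (range_subset_range.2 n.le_succ) fun k _ _ => ha k

theorem summable_of_le_add_sub {φ : ℝ → ℝ}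
    (hsuper : ∀ t s, 0 ≤ t → 0 ≤ s → φ t + φ s ≤ φ (t + s))
    (hcoer : Tendsto (fun t => t - φ t) atTop atTop)
    {a g : ℕ → ℝ} (ha : ∀ n, 0 ≤ a n) (hg : ∀ n, 0 ≤ g n)
    (hrec : ∀ n, a (n + 1) ≤ φ (a n) + g n - g (n + 1)) : Summable a :=
  summable_of_tendsto_atTop_of_sum_range_succ_le ha hcoer (C := a 0 + g 0) fun n => by
    linarith [sum_range_succ_sub_le_of_le_add_sub hsuper ha hrec n, hg (n + 1)]

theorem series_of_iterates_summable_general {X : Type*} [MetricSpace X]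
    (S T : X → X)
    (φ : ℝ → ℝ)
    (hsuper : ∀ t s, 0 ≤ t → 0 ≤ s → φ t + φ s ≤ φ (t + s))
    (hcoer : Filter.Tendsto (fun t => t - φ t) Filter.atTop Filter.atTop)
    (γ : X → X → ℝ) (hγ0 : ∀ x y, 0 ≤ γ x y)
    (hcontr : ∀ x y : X,
      dist (S x) (T y) ≤ φ (dist x y) + γ x y - γ (S x) (T y)) :
    ∀ x₀ y₀ : X, Summable (fun n : ℕ => dist (S^[n] x₀) (T^[n] y₀)) := by
  intro x₀ y₀
  refine summable_of_le_add_sub hsuper hcoer (fun _ => dist_nonneg)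
    (g := fun n => γ (S^[n] x₀) (T^[n] y₀)) (fun _ => hγ0 _ _) fun n => ?_
  simpa only [Function.iterate_succ_apply'] using hcontr (S^[n] x₀) (T^[n] y₀)

/-- First step of the proof of the main theorem: under the contractive
condition `d(Sx,Ty) ≤ φ(d(x,y)) + γ(x,y) - γ(Sx,Ty)` with `φ` regressive,
super-additive and complementary coercive and `γ ≥ 0`, the series
`∑ n, d(Sⁿx₀, Tⁿy₀)` converges for all `x₀, y₀`. -/
theorem series_of_iterates_summable {X : Type*} [MetricSpace X]
    (S T : X → X)
    (φ : ℝ → ℝ) (hφnn : ∀ t, 0 ≤ t → 0 ≤ φ t)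
    (hreg0 : φ 0 = 0) (hreg : ∀ t, 0 < t → φ t < t)
    (hsuper : ∀ t s, 0 ≤ t → 0 ≤ s → φ t + φ s ≤ φ (t + s))
    (hcoer : Filter.Tendsto (fun t => t - φ t) Filter.atTop Filter.atTop)
    (γ : X → X → ℝ) (hγ0 : ∀ x y, 0 ≤ γ x y)
    (hcontr : ∀ x y : X,
      dist (S x) (T y) ≤ φ (dist x y) + γ x y - γ (S x) (T y)) :
    ∀ x₀ y₀ : X, Summable (fun n : ℕ => dist (S^[n] x₀) (T^[n] y₀)) :=
  series_of_iterates_summable_general S T φ hsuper hcoer γ hγ0 hcontr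
end

section
/- Let (X,d) be a metric space, S, T : X → X selfmaps, φ : [0,∞) → [0,∞) regressive, super-additive, and complementary coercive, and γ : X × X → [0,∞) a map satisfying d(Sx,Ty) ≤ φ(d(x,y)) + γ(x,y) − γ(Sx,Ty) for all x, y ∈ X. Then for each x₀ ∈ X, the sequence (Sⁿx₀)_{n≥0} is a Cauchy sequence, and for each y₀ ∈ X, the sequence (Tⁿy₀)_{n≥0} is a Cauchy sequence. -/
/-! Super-additivity gives `n φ(t) ≤ φ(n t)`, hence `ψ(n t) ≤ n ψ(t)` for `ψ = id - φ`; since `ψ`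
is coercive, choosing `n ≈ M / t` yields `φ(t) ≤ q t` on `[0, M]` with `q = 1 - 1/(2M)`. Along the orbits,
`aₙ = d(Sⁿx, Tⁿy)` and `gₙ = γ(Sⁿx, Tⁿy)` satisfy `aₙ₊₁ + gₙ₊₁ ≤ φ(aₙ) + gₙ`, so `aₙ + gₙ`
decreases, `aₙ` stays bounded, and telescoping gives `(1 - q) ∑ aₙ ≤ a₀ + g₀`. Summability of
`d(Sⁿx, Tⁿx)` and `d(Sⁿ⁺¹x, Tⁿx)` bounds the consecutive distances of `(Sⁿx)`; the claim for `T`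
is the same with the roles of `S` and `T` exchanged. -/

open Finset

theorem nat_mul_le_of_superadditive {φ : ℝ → ℝ}
    (hsuper : ∀ t s, 0 ≤ t → 0 ≤ s → φ t + φ s ≤ φ (t + s)) {t : ℝ} (ht : 0 ≤ t) {n : ℕ}
    (hn : 1 ≤ n) : n * φ t ≤ φ (n * t) := by
  induction n, hn using Nat.le_induction with
  | base => simp
  | succ n _ ih =>
    have := hsuper (n * t) t (by positivity) ht
    push_cast
    rw [add_one_mul, add_one_mul]
    linarith

theorem exists_lt_one_le_mul_of_superadditive {φ : ℝ → ℝ}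
    (hsuper : ∀ t s, 0 ≤ t → 0 ≤ s → φ t + φ s ≤ φ (t + s))
    (hcoer : Filter.Tendsto (fun t => t - φ t) Filter.atTop Filter.atTop) (B : ℝ) :
    ∃ q < 1, ∀ t, 0 ≤ t → t ≤ B → φ t ≤ q * t := by
  obtain ⟨R, hR⟩ := (hcoer.eventually_ge_atTop 1).exists_forall_of_atTop
  set M := max (max R B) 1
  have hM : 0 < M := lt_of_lt_of_le one_pos (le_max_right _ _)
  refine ⟨1 - 1 / (2 * M), sub_lt_self 1 (by positivity), fun t ht htB => ?_⟩
  rcases ht.eq_or_lt with rfl | ht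
  · simpa using hsuper 0 0 le_rfl le_rfl
  set n := ⌈M / t⌉₊
  have hn : 1 ≤ n := Nat.one_le_ceil_iff.mpr (by positivity)
  have hMnt : M ≤ n * t := (div_le_iff₀ ht).mp (Nat.le_ceil _)
  have hnt : n * t ≤ 2 * M := by
    have hn' : (n : ℝ) < M / t + 1 := Nat.ceil_lt_add_one (by positivity)
    have htM : t ≤ M := htB.trans (le_max_of_le_left (le_max_right R B))
    calc n * t ≤ (M / t + 1) * t := mul_le_mul_of_nonneg_right hn'.le ht.le
      _ = M + t := by field_simp
      _ ≤ 2 * M := by linarith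
  have hψ : 1 ≤ n * (t - φ t) := by
    have := hR (n * t) ((le_max_left R B).trans (le_max_left _ _) |>.trans hMnt)
    have := nat_mul_le_of_superadditive hsuper ht.le hn
    linarith [mul_sub (n : ℝ) t (φ t)]
  have hψpos : 0 ≤ t - φ t := (pos_of_mul_pos_right (one_pos.trans_le hψ) n.cast_nonneg).le
  have key : t ≤ 2 * M * (t - φ t) :=
    calc t ≤ t * (n * (t - φ t)) := le_mul_of_one_le_right ht.le hψ
      _ = n * t * (t - φ t) := by ring
      _ ≤ 2 * M * (t - φ t) := mul_le_mul_of_nonneg_right hnt hψpos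
  have : t / (2 * M) ≤ t - φ t := by rwa [div_le_iff₀' (by positivity)]
  linarith [show (1 - 1 / (2 * M)) * t = t - t / (2 * M) by ring]

theorem le_self_of_superadditive {φ : ℝ → ℝ}
    (hsuper : ∀ t s, 0 ≤ t → 0 ≤ s → φ t + φ s ≤ φ (t + s))
    (hcoer : Filter.Tendsto (fun t => t - φ t) Filter.atTop Filter.atTop) {t : ℝ} (ht : 0 ≤ t) :
    φ t ≤ t := by
  obtain ⟨q, hq, hφq⟩ := exists_lt_one_le_mul_of_superadditive hsuper hcoer t
  exact (hφq t ht le_rfl).trans (mul_le_of_le_one_left ht hq.le)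

theorem summable_of_le_superadditive_add_sub {φ : ℝ → ℝ}
    (hsuper : ∀ t s, 0 ≤ t → 0 ≤ s → φ t + φ s ≤ φ (t + s))
    (hcoer : Filter.Tendsto (fun t => t - φ t) Filter.atTop Filter.atTop) {a g : ℕ → ℝ}
    (ha : ∀ n, 0 ≤ a n) (hg : ∀ n, 0 ≤ g n) (hstep : ∀ n, a (n + 1) ≤ φ (a n) + g n - g (n + 1)) :
    Summable a := by
  set E := fun n => a n + g n
  have hE : Antitone E := antitone_nat_of_succ_le fun n => by
    linarith [hstep n, le_self_of_superadditive hsuper hcoer (ha n)]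
  obtain ⟨q, hq, hφq⟩ := exists_lt_one_le_mul_of_superadditive hsuper hcoer (E 0)
  have hdecr : ∀ n, a n * (1 - q) ≤ E n - E (n + 1) := fun n => by
    have := hφq (a n) (ha n) (by linarith [hE (Nat.zero_le n), hg n])
    linarith [hstep n]
  refine summable_of_sum_range_le ha (c := E 0 / (1 - q)) fun N => ?_
  rw [le_div_iff₀ (sub_pos.2 hq), sum_mul]
  calc ∑ i ∈ range N, a i * (1 - q) ≤ ∑ i ∈ range N, (E i - E (i + 1)) :=
        sum_le_sum fun i _ => hdecr i
    _ = E 0 - E N := sum_range_sub' E N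
    _ ≤ E 0 := by linarith [ha N, hg N]

theorem summable_dist_iterate {X : Type*} [PseudoMetricSpace X] {S T : X → X} {φ : ℝ → ℝ}
    (hsuper : ∀ t s, 0 ≤ t → 0 ≤ s → φ t + φ s ≤ φ (t + s))
    (hcoer : Filter.Tendsto (fun t => t - φ t) Filter.atTop Filter.atTop)
    {γ : X → X → ℝ} (hγ0 : ∀ x y, 0 ≤ γ x y)
    (hcontr : ∀ x y, dist (S x) (T y) ≤ φ (dist x y) + γ x y - γ (S x) (T y)) (x y : X) :
    Summable fun n => dist (S^[n] x) (T^[n] y) :=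
  summable_of_le_superadditive_add_sub hsuper hcoer (g := fun n => γ (S^[n] x) (T^[n] y))
    (fun _ => dist_nonneg) (fun _ => hγ0 _ _) fun n => by
      simpa only [Function.iterate_succ_apply'] using hcontr (S^[n] x) (T^[n] y)

theorem cauchySeq_of_summable_dist_of_summable_dist_succ {X : Type*} [PseudoMetricSpace X]
    {u v : ℕ → X} (h : Summable fun n => dist (u n) (v n))
    (h_succ : Summable fun n => dist (u (n + 1)) (v n)) : CauchySeq u :=
  cauchySeq_of_summable_dist <| (h.add h_succ).of_nonneg_of_le (fun _ => dist_nonneg) fun n =>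
    dist_triangle_right _ _ (v n)

theorem cauchySeq_iterate_left {X : Type*} [PseudoMetricSpace X] {S T : X → X} {φ : ℝ → ℝ}
    (hsuper : ∀ t s, 0 ≤ t → 0 ≤ s → φ t + φ s ≤ φ (t + s))
    (hcoer : Filter.Tendsto (fun t => t - φ t) Filter.atTop Filter.atTop)
    {γ : X → X → ℝ} (hγ0 : ∀ x y, 0 ≤ γ x y)
    (hcontr : ∀ x y, dist (S x) (T y) ≤ φ (dist x y) + γ x y - γ (S x) (T y)) (x : X) :
    CauchySeq fun n => S^[n] x := by
  refine cauchySeq_of_summable_dist_of_summable_dist_succ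
    (summable_dist_iterate hsuper hcoer hγ0 hcontr x x) ?_
  simpa only [Function.iterate_succ_apply] using
    summable_dist_iterate hsuper hcoer hγ0 hcontr (S x) x

theorem iterates_cauchy_general {X : Type*} [MetricSpace X]
    (S T : X → X)
    (φ : ℝ → ℝ)
    (hsuper : ∀ t s, 0 ≤ t → 0 ≤ s → φ t + φ s ≤ φ (t + s))
    (hcoer : Filter.Tendsto (fun t => t - φ t) Filter.atTop Filter.atTop)
    (γ : X → X → ℝ) (hγ0 : ∀ x y, 0 ≤ γ x y)
    (hcontr : ∀ x y : X,
      dist (S x) (T y) ≤ φ (dist x y) + γ x y - γ (S x) (T y)) :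
    (∀ x₀ : X, CauchySeq (fun n : ℕ => S^[n] x₀)) ∧
    (∀ y₀ : X, CauchySeq (fun n : ℕ => T^[n] y₀)) :=
  ⟨cauchySeq_iterate_left hsuper hcoer hγ0 hcontr,
    cauchySeq_iterate_left (S := T) (T := S) (γ := fun y x => γ x y) hsuper hcoer
      (fun _ _ => hγ0 _ _) fun y x => by simpa only [dist_comm] using hcontr x y⟩

/-- Intermediate claim in the proof of the main theorem: under the contractive
condition `d(Sx,Ty) ≤ φ(d(x,y)) + γ(x,y) - γ(Sx,Ty)` with `φ` regressive,
super-additive and complementary coercive and `γ ≥ 0`, every iterate sequence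
`(Sⁿx₀)` and `(Tⁿy₀)` is Cauchy. -/
theorem iterates_cauchy {X : Type*} [MetricSpace X]
    (S T : X → X)
    (φ : ℝ → ℝ) (hφnn : ∀ t, 0 ≤ t → 0 ≤ φ t)
    (hreg0 : φ 0 = 0) (hreg : ∀ t, 0 < t → φ t < t)
    (hsuper : ∀ t s, 0 ≤ t → 0 ≤ s → φ t + φ s ≤ φ (t + s))
    (hcoer : Filter.Tendsto (fun t => t - φ t) Filter.atTop Filter.atTop)
    (γ : X → X → ℝ) (hγ0 : ∀ x y, 0 ≤ γ x y)
    (hcontr : ∀ x y : X,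
      dist (S x) (T y) ≤ φ (dist x y) + γ x y - γ (S x) (T y)) :
    (∀ x₀ : X, CauchySeq (fun n : ℕ => S^[n] x₀)) ∧
    (∀ y₀ : X, CauchySeq (fun n : ℕ => T^[n] y₀)) :=
  iterates_cauchy_general S T φ hsuper hcoer γ hγ0 hcontr
end

section
/- Let (X,d) be a metric space, S, T : X → X selfmaps, φ : [0,∞) → [0,∞) regressive and complementary coercive, and γ : X × X → [0,∞) a map satisfying, for all x, y ∈ X and all n ≥ 1, the condition ∑_{j=1}^{n} d(Sʲx, Tʲy) ≤ φ(∑_{j=0}^{n-1} d(Sʲx, Tʲy)) + γ(x,y) − γ(Sⁿx, Tⁿy). Then for all x₀, y₀ ∈ X, the series ∑_n d(Sⁿx₀, Tⁿy₀) converges; moreover its partial sums are bounded by g(d(x₀,y₀) + γ(x₀,y₀)), where g(r) := sup{ t ≥ 0 : t − φ(t) ≤ r }. -/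
/-!
The condition at `(x₀, y₀)` says that every partial sum `P n` of `dist (Sʲ x₀) (Tʲ y₀)` with
`n ≥ 1` satisfies `P n - φ (P n) ≤ P (n + 1) - φ (P n) ≤ dist x₀ y₀ + γ x₀ y₀`, since
`γ ≥ 0` lets the subtracted term be dropped. Coercivity of `t - φ t` makes this sublevel set
bounded, so the nondecreasing partial sums are bounded by its supremum, and a series of
nonnegative terms with bounded partial sums converges.
-/

open Finset Filter

theorem Filter.Tendsto.bddAbove_setOf_le {α β : Type*} [LinearOrder α] [Nonempty α]
    [Preorder β] [NoMaxOrder β] {f : α → β} (hf : Tendsto f atTop atTop) (r : β) :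
    BddAbove {t | f t ≤ r} := by
  obtain ⟨M, hM⟩ := (hf.eventually_gt_atTop r).exists_forall_of_atTop
  exact ⟨M, fun t ht => le_of_not_ge fun hMt => (hM t hMt).not_ge ht⟩

theorem sum_range_succ_eq_add_sum_Icc_one {M : Type*} [AddCommMonoid M] (a : ℕ → M) (n : ℕ) :
    ∑ j ∈ range (n + 1), a j = a 0 + ∑ j ∈ Icc 1 n, a j := by
  rw [range_eq_Ico, sum_eq_sum_Ico_succ_bot n.succ_pos, zero_add, Nat.succ_eq_add_one,
    Ico_add_one_right_eq_Icc]

theorem sum_range_sub_le_of_sum_Icc_le {a : ℕ → ℝ} (ha : ∀ j, 0 ≤ a j) {φ : ℝ → ℝ} {c : ℝ}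
    {n : ℕ} (h : ∑ j ∈ Icc 1 n, a j ≤ φ (∑ j ∈ range n, a j) + c) :
    ∑ j ∈ range n, a j - φ (∑ j ∈ range n, a j) ≤ a 0 + c := by
  have := sum_range_succ_eq_add_sum_Icc_one a n
  rw [sum_range_succ] at this
  linarith [ha n]

theorem sum_range_le_csSup {a : ℕ → ℝ} (ha : ∀ j, 0 ≤ a j) {A : Set ℝ} (hA : BddAbove A)
    (hmem : ∀ n, 1 ≤ n → ∑ j ∈ range n, a j ∈ A) (n : ℕ) :
    ∑ j ∈ range n, a j ≤ sSup A :=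
  calc ∑ j ∈ range n, a j ≤ ∑ j ∈ range (n + 1), a j := by rw [sum_range_succ]; linarith [ha n]
    _ ≤ sSup A := le_csSup hA (hmem _ n.succ_pos)

theorem summed_condition_summable_general {X : Type*} [MetricSpace X]
    (S T : X → X)
    (φ : ℝ → ℝ)
    (hcoer : Filter.Tendsto (fun t => t - φ t) Filter.atTop Filter.atTop)
    (γ : X → X → ℝ) (hγ0 : ∀ x y, 0 ≤ γ x y)
    (hcontr : ∀ x y : X, ∀ n : ℕ, 1 ≤ n →
      ∑ j ∈ Finset.Icc 1 n, dist (S^[j] x) (T^[j] y) ≤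
        φ (∑ j ∈ Finset.range n, dist (S^[j] x) (T^[j] y)) +
          γ x y - γ (S^[n] x) (T^[n] y)) :
    ∀ x₀ y₀ : X,
      Summable (fun n : ℕ => dist (S^[n] x₀) (T^[n] y₀)) ∧
      ∀ n : ℕ, ∑ j ∈ Finset.range n, dist (S^[j] x₀) (T^[j] y₀) ≤
        sSup {t : ℝ | 0 ≤ t ∧ t - φ t ≤ dist x₀ y₀ + γ x₀ y₀} := by
  intro x₀ y₀
  set A : Set ℝ := {t : ℝ | 0 ≤ t ∧ t - φ t ≤ dist x₀ y₀ + γ x₀ y₀}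
  have hdist : ∀ j, 0 ≤ dist (S^[j] x₀) (T^[j] y₀) := fun _ => dist_nonneg
  have hbdd : BddAbove A := (hcoer.bddAbove_setOf_le _).mono fun _ ht => ht.2
  have hmem : ∀ n, 1 ≤ n → ∑ j ∈ range n, dist (S^[j] x₀) (T^[j] y₀) ∈ A := fun n hn =>
    ⟨sum_nonneg fun j _ => hdist j, sum_range_sub_le_of_sum_Icc_le hdist <|
      (hcontr x₀ y₀ n hn).trans (sub_le_self _ (hγ0 _ _))⟩
  have hbound := sum_range_le_csSup hdist hbdd hmem
  exact ⟨summable_of_sum_range_le hdist hbound, hbound⟩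

/-- Key intermediate claim in the proof of Theorem 5: under the summed
contractive condition, for all `x₀, y₀` the series `∑ n, d(Sⁿx₀,Tⁿy₀)`
converges, and its partial sums are bounded by
`g (d(x₀,y₀) + γ(x₀,y₀))`, where `g r = sup { t ≥ 0 : t - φ t ≤ r }`. -/
theorem summed_condition_summable {X : Type*} [MetricSpace X]
    (S T : X → X)
    (φ : ℝ → ℝ) (hφnn : ∀ t, 0 ≤ t → 0 ≤ φ t)
    (hreg0 : φ 0 = 0) (hreg : ∀ t, 0 < t → φ t < t)
    (hcoer : Filter.Tendsto (fun t => t - φ t) Filter.atTop Filter.atTop)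
    (γ : X → X → ℝ) (hγ0 : ∀ x y, 0 ≤ γ x y)
    (hcontr : ∀ x y : X, ∀ n : ℕ, 1 ≤ n →
      ∑ j ∈ Finset.Icc 1 n, dist (S^[j] x) (T^[j] y) ≤
        φ (∑ j ∈ Finset.range n, dist (S^[j] x) (T^[j] y)) +
          γ x y - γ (S^[n] x) (T^[n] y)) :
    ∀ x₀ y₀ : X,
      Summable (fun n : ℕ => dist (S^[n] x₀) (T^[n] y₀)) ∧
      ∀ n : ℕ, ∑ j ∈ Finset.range n, dist (S^[j] x₀) (T^[j] y₀) ≤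
        sSup {t : ℝ | 0 ≤ t ∧ t - φ t ≤ dist x₀ y₀ + γ x₀ y₀} :=
  summed_condition_summable_general S T φ hcoer γ hγ0 hcontr
end

section
/- Let (t_n)_{n≥0} be a strictly increasing sequence in [0,∞) with t₀ = 0, t_n > 1 for n ≥ 1, and t_n/√(t_{n+1}) → ∞ as n → ∞. Define r_n := 1 − 1/√(t_n) for n ≥ 1, and define χ : [0,∞) → [0,∞) by χ(t) = r_{n+1} for t ∈ [t_n, t_{n+1}), and set φ(t) := t·χ(t). Then (r_n)_{n≥1} is a strictly increasing sequence in (0,1) with r_n → 1, the function φ is regressive, and φ is complementary coercive (i.e., t − φ(t) → ∞ as t → ∞). -/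
/-!
On `[t n, t (n+1))` the function `s ↦ s - φ s` equals `s / √(t (n+1)) ≥ t n / √(t (n+1))`,
so it tends to infinity with the ratio `t n / √(t (n+1))`. Since `r (n+1) < 1`, `φ s < s`.
-/

open Filter Set

theorem exists_mem_Ico_of_tendsto_atTop {α : Type*} [LinearOrder α] [NoMaxOrder α]
    {t : ℕ → α} (ht : Tendsto t atTop atTop) {s : α} (hs : t 0 ≤ s) :
    ∃ n, s ∈ Ico (t n) (t (n + 1)) := by
  classical
  have h : ∃ m, s < t m := (ht.eventually_gt_atTop s).exists
  have hne : Nat.find h ≠ 0 := fun h0 => (Nat.find_spec h).not_ge (h0 ▸ hs)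
  obtain ⟨n, hn⟩ := Nat.exists_eq_succ_of_ne_zero hne
  exact ⟨n, not_lt.1 (Nat.find_min h (hn ▸ n.lt_succ_self)), by simpa [hn] using Nat.find_spec h⟩

theorem tendsto_atTop_of_le_on_Ico {α β : Type*} [LinearOrder α] [NoMaxOrder α] [Preorder β]
    {t : ℕ → α} {a : ℕ → β} {ψ : α → β} (ht : StrictMono t) (htop : Tendsto t atTop atTop)
    (ha : Tendsto a atTop atTop) (hψ : ∀ n, ∀ s ∈ Ico (t n) (t (n + 1)), a n ≤ ψ s) :
    Tendsto ψ atTop atTop := by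
  refine tendsto_atTop.2 fun C => ?_
  obtain ⟨N, hN⟩ := eventually_atTop.1 (tendsto_atTop.1 ha C)
  filter_upwards [eventually_ge_atTop (t N)] with s hs
  obtain ⟨n, hn⟩ := exists_mem_Ico_of_tendsto_atTop htop ((ht.monotone N.zero_le).trans hs)
  have hNn : N ≤ n := Nat.lt_succ_iff.1 (ht.lt_iff_lt.1 (hs.trans_lt hn.2))
  exact (hN n hNn).trans (hψ n s hn)

theorem one_sub_one_div_sqrt_mem_Ioo {x : ℝ} (hx : 1 < x) : 1 - 1 / √x ∈ Ioo 0 1 := by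
  have h : 1 < √x := Real.sqrt_one ▸ Real.sqrt_lt_sqrt zero_le_one hx
  exact ⟨sub_pos.2 ((div_lt_one (zero_lt_one.trans h)).2 h), sub_lt_self 1 (by positivity)⟩

theorem one_sub_one_div_sqrt_lt {x y : ℝ} (hx : 0 < x) (hxy : x < y) :
    1 - 1 / √x < 1 - 1 / √y :=
  sub_lt_sub_left (one_div_lt_one_div_of_lt (Real.sqrt_pos.2 hx) (Real.sqrt_lt_sqrt hx.le hxy)) 1

theorem tendsto_one_sub_one_div_sqrt_atTop :
    Tendsto (fun x : ℝ => 1 - 1 / √x) atTop (nhds 1) := by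
  simpa using tendsto_const_nhds.sub (tendsto_inv_atTop_zero.comp Real.tendsto_sqrt_atTop)

/-- Concrete construction of complementary coercive regressive functions
(end of Section 3): given a strictly increasing sequence `t` with `t 0 = 0`,
`t n > 1` for `n ≥ 1`, and `t n / √(t (n+1)) → ∞`, set `r n = 1 - 1/√(t n)`
and let `χ` take the value `r (n+1)` on `[t n, t (n+1))`, and `φ s = s * χ s`.
Then `(r n)` is strictly increasing in `(0,1)` with `r n → 1`, `φ` is
regressive, and `φ` is complementary coercive. -/
theorem piecewise_construction
    (t : ℕ → ℝ) (ht_mono : StrictMono t) (ht0 : t 0 = 0)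
    (ht1 : ∀ n : ℕ, 1 ≤ n → 1 < t n)
    (hratio : Filter.Tendsto (fun n => t n / Real.sqrt (t (n + 1)))
      Filter.atTop Filter.atTop)
    (r : ℕ → ℝ) (hr : ∀ n : ℕ, 1 ≤ n → r n = 1 - 1 / Real.sqrt (t n))
    (χ : ℝ → ℝ)
    (hχ : ∀ n : ℕ, ∀ s : ℝ, t n ≤ s → s < t (n + 1) → χ s = r (n + 1))
    (φ : ℝ → ℝ) (hφ : ∀ s : ℝ, 0 ≤ s → φ s = s * χ s) :
    (∀ n : ℕ, 1 ≤ n → 0 < r n ∧ r n < 1) ∧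
    (∀ n : ℕ, 1 ≤ n → r n < r (n + 1)) ∧
    Filter.Tendsto r Filter.atTop (nhds 1) ∧
    (φ 0 = 0 ∧ ∀ s : ℝ, 0 < s → φ s < s) ∧
    Filter.Tendsto (fun s => s - φ s) Filter.atTop Filter.atTop := by
  have ht_nonneg (n : ℕ) : 0 ≤ t n := ht0 ▸ ht_mono.monotone n.zero_le
  have htop : Tendsto t atTop atTop := tendsto_atTop_mono
    (fun n => div_le_self (ht_nonneg n) (Real.one_le_sqrt.2 (ht1 (n + 1) n.succ_pos).le)) hratio
  have hφ_Ico (n : ℕ) (s : ℝ) (hs : s ∈ Ico (t n) (t (n + 1))) :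
      φ s = s * (1 - 1 / √(t (n + 1))) := by
    rw [hφ s ((ht_nonneg n).trans hs.1), hχ n s hs.1 hs.2, hr (n + 1) n.succ_pos]
  refine ⟨fun n hn => hr n hn ▸ one_sub_one_div_sqrt_mem_Ioo (ht1 n hn), fun n hn => ?_, ?_,
    ⟨by simp [hφ], fun s hs => ?_⟩, tendsto_atTop_of_le_on_Ico ht_mono htop hratio ?_⟩
  · rw [hr n hn, hr (n + 1) n.succ_pos]
    exact one_sub_one_div_sqrt_lt (zero_lt_one.trans (ht1 n hn)) (ht_mono n.lt_succ_self)
  · refine (tendsto_one_sub_one_div_sqrt_atTop.comp htop).congr' ?_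
    filter_upwards [eventually_ge_atTop 1] with n hn using (hr n hn).symm
  · obtain ⟨n, hn⟩ := exists_mem_Ico_of_tendsto_atTop htop (ht0 ▸ hs.le)
    rw [hφ_Ico n s hn]
    exact mul_lt_of_lt_one_right hs (one_sub_one_div_sqrt_mem_Ioo (ht1 (n + 1) n.succ_pos)).2
  · intro n s hs
    rw [hφ_Ico n s hs, show s - s * (1 - 1 / √(t (n + 1))) = s / √(t (n + 1)) by ring]
    gcongr
    exact hs.1
end
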